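/- arXiv:2508.17628 — 5 statements merged into one kernel-verified Lean document; each statement's English description precedes it below -/
import Mathlib

section
/- Assume (f2). For all u₁, u₂ ∈ ℝ and t₁, t₂ > 0 with (u₁,t₁) ≠ (u₂,t₂), the effective nonlinearity satisfies the modulus-of-continuity estimate |f̄(u₁,t₁) − f̄(u₂,t₂)| ≤ 2 / ⌊ (1/κ) W( 1/(|u₁−u₂| + |t₁−t₂|) ) ⌋, whenever the floor in the denominator is at least 1; in particular, for every n ∈ ℕ one has |f̄(u₁,t₁) − f̄(u₂,t₂)| ≤ (1 + (|u₁−u₂| + |t₁−t₂|) κ n e^{κn}) / n. -/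
/-!
Uniqueness for the Lipschitz ODE and periodicity of the field in both variables make the flow
order preserving, equivariant under integer translations in space, and let it restart at
integer times. Hence `g(τ) = v(τ; 0, u, t)` is superadditive up to an error `1` at integer
times: `g(N + s) ≥ g(N) + g(s) - 1`, so `g(qn + s) ≥ q g(n) + g(s) - q`. For `k = qn + s` with
`0 ≤ s < n` this gives `f̄(u₁, t₁) k ≤ g₁(s) + q g₁(n)`, and Grönwall's inequality on `[0, n]`
bounds `g₁ - g₂` by `δ κ e^{κn} s` with `δ = |u₁ - u₂| + |t₁ - t₂|`. Together,
`f̄(u₁, t₁) ≤ f̄(u₂, t₂) + 1/n + δ κ e^{κn}`. For `n = ⌊W(1/δ)/κ⌋` one has `δ κ n e^{κn} ≤ 1`,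
giving `2/n`.
-/

open Function Set
open scoped NNReal

structure IsFlow (F : ℝ → ℝ → ℝ) (φ : ℝ → ℝ → ℝ) : Prop where
  hasDerivAt : ∀ c τ, HasDerivAt (φ c) (F (φ c τ) τ) τ
  apply_zero : ∀ c, φ c 0 = c

section Flow

variable {F : ℝ → ℝ → ℝ} {K : ℝ≥0} {φ : ℝ → ℝ → ℝ}

theorem ode_solution_eq_of_eq (hF : ∀ τ, LipschitzWith K (F · τ)) {g h : ℝ → ℝ}
    (hg : ∀ τ, HasDerivAt g (F (g τ) τ) τ) (hh : ∀ τ, HasDerivAt h (F (h τ) τ) τ) {τ₀ : ℝ}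
    (heq : g τ₀ = h τ₀) : g = h :=
  ODE_solution_unique_univ (v := fun τ x => F x τ) (s := fun _ => univ)
    (fun τ => (hF τ).lipschitzOnWith) (fun τ => ⟨hg τ, trivial⟩) (fun τ => ⟨hh τ, trivial⟩) heq

theorem IsFlow.continuous (hφ : IsFlow F φ) (c : ℝ) : Continuous (φ c) :=
  continuous_iff_continuousAt.2 fun τ => (hφ.hasDerivAt c τ).continuousAt

theorem IsFlow.mono (hF : ∀ τ, LipschitzWith K (F · τ)) (hφ : IsFlow F φ) {c₁ c₂ : ℝ}
    (hc : c₁ ≤ c₂) (τ : ℝ) : φ c₁ τ ≤ φ c₂ τ := by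
  by_contra! hlt
  obtain ⟨s, hs⟩ : (0 : ℝ) ∈ range (fun τ => φ c₂ τ - φ c₁ τ) :=
    intermediate_value_univ (f := fun τ => φ c₂ τ - φ c₁ τ) τ 0
      ((hφ.continuous c₂).sub (hφ.continuous c₁))
      ⟨by linarith, by simp [hφ.apply_zero, hc]⟩
  have := ode_solution_eq_of_eq hF (hφ.hasDerivAt c₁) (hφ.hasDerivAt c₂) (τ₀ := s)
    (by linarith [show φ c₂ s - φ c₁ s = 0 from hs])
  exact hlt.ne' (congrFun this τ)

theorem IsFlow.add_intCast (hF : ∀ τ, LipschitzWith K (F · τ)) (hφ : IsFlow F φ)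
    (hper : ∀ τ, Periodic (F · τ) 1) (c : ℝ) (m : ℤ) (τ : ℝ) :
    φ (c + m) τ = φ c τ + m := by
  refine congrFun (ode_solution_eq_of_eq hF (g := φ (c + m)) (h := fun s => φ c s + m)
    (hφ.hasDerivAt (c + m)) (fun s => ?_) (τ₀ := 0) ?_) τ
  · simpa using ((hφ.hasDerivAt c s).add_const (m : ℝ)).congr_deriv
      ((hper s).int_mul m (φ c s)).symm
  · simp [hφ.apply_zero]

theorem IsFlow.apply_intCast_add (hF : ∀ τ, LipschitzWith K (F · τ)) (hφ : IsFlow F φ)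
    (hper : ∀ x, Periodic (F x) 1) (c : ℝ) (N : ℤ) (s : ℝ) :
    φ c (N + s) = φ (φ c N) s := by
  refine congrFun (ode_solution_eq_of_eq hF (g := fun s => φ c (N + s))
    (fun s => ?_) (hφ.hasDerivAt (φ c N)) (τ₀ := 0) ?_) s
  · have hp := (hper (φ c (N + s))).int_mul N s
    rw [mul_one, add_comm s] at hp
    have h := (hφ.hasDerivAt c (N + s)).comp s ((hasDerivAt_id s).const_add (N : ℝ))
    rw [mul_one, hp] at h
    exact h
  · simp [hφ.apply_zero]

theorem IsFlow.add_sub_one_le_apply_intCast_add (hF : ∀ τ, LipschitzWith K (F · τ))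
    (hφ : IsFlow F φ) (hperx : ∀ τ, Periodic (F · τ) 1) (hperτ : ∀ x, Periodic (F x) 1)
    (N : ℤ) (s : ℝ) : φ 0 N + φ 0 s - 1 ≤ φ 0 (N + s) := by
  rw [hφ.apply_intCast_add hF hperτ]
  calc φ 0 N + φ 0 s - 1 ≤ φ 0 s + ⌊φ 0 N⌋ := by linarith [Int.sub_one_lt_floor (φ 0 N)]
    _ = φ (0 + ⌊φ 0 N⌋) s := (hφ.add_intCast hF hperx 0 _ s).symm
    _ ≤ φ (φ 0 N) s := hφ.mono hF (by simpa using Int.floor_le (φ 0 N)) s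

theorem IsFlow.nat_mul_add_le_apply (hF : ∀ τ, LipschitzWith K (F · τ))
    (hφ : IsFlow F φ) (hperx : ∀ τ, Periodic (F · τ) 1) (hperτ : ∀ x, Periodic (F x) 1)
    (n q : ℕ) (s : ℝ) : q * φ 0 n + φ 0 s - q ≤ φ 0 (q * n + s) := by
  induction q with
  | zero => simp
  | succ q ih =>
    have := hφ.add_sub_one_le_apply_intCast_add hF hperx hperτ n (q * n + s)
    push_cast at this ⊢
    rw [show ((q : ℝ) + 1) * n + s = n + (q * n + s) by ring]
    linarith

theorem IsFlow.abs_sub_le (hφ : IsFlow F φ) {M : ℝ} (hM : ∀ x τ, |F x τ| ≤ M) (c : ℝ)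
    {T : ℝ} (hT : 0 ≤ T) : |φ c T - c| ≤ M * T := by
  simpa [hφ.apply_zero] using norm_image_sub_le_of_norm_deriv_le_segment' (f := φ c) (a := 0)
    (fun x _ => (hφ.hasDerivAt c x).hasDerivWithinAt) (fun x _ => hM _ _) T ⟨hT, le_rfl⟩

theorem IsFlow.abs_sub_le_gronwallBound {F₁ F₂ φ₁ φ₂ : ℝ → ℝ → ℝ}
    (hF₂ : ∀ τ, LipschitzWith K (F₂ · τ)) (hφ₁ : IsFlow F₁ φ₁) (hφ₂ : IsFlow F₂ φ₂) {ε : ℝ}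
    (hε : ∀ x τ, |F₁ x τ - F₂ x τ| ≤ ε) (c : ℝ) {T : ℝ} (hT : 0 ≤ T) :
    |φ₁ c T - φ₂ c T| ≤ gronwallBound 0 K ε T := by
  simpa only [Real.dist_eq, add_zero, sub_zero] using
    dist_le_of_approx_trajectories_ODE (v := fun τ x => F₂ x τ) hF₂
    (hφ₁.continuous c).continuousOn (fun τ _ => (hφ₁.hasDerivAt c τ).hasDerivWithinAt)
    (fun τ _ => hε _ _) (hφ₂.continuous c).continuousOn
    (fun τ _ => (hφ₂.hasDerivAt c τ).hasDerivWithinAt) (fun τ _ => by simp) (δ := 0) (εg := 0)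
    (by simp [hφ₁.apply_zero, hφ₂.apply_zero]) T ⟨hT, le_rfl⟩

end Flow

theorem gronwallBound_zero_le {K ε x T : ℝ} (hK : 0 ≤ K) (hε : 0 ≤ ε) (hx : 0 ≤ x)
    (hxT : x ≤ T) : gronwallBound 0 K ε x ≤ ε * Real.exp (K * T) * x := by
  rcases hK.eq_or_lt with rfl | hK
  · simp [gronwallBound_K0]
  have hexp : Real.exp (K * x) - 1 ≤ K * x * Real.exp (K * T) := by
    have h :=
      mul_le_mul_of_nonneg_right (Real.add_one_le_exp (-(K * x))) (Real.exp_pos (K * x)).le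
    rw [← Real.exp_add, neg_add_cancel, Real.exp_zero] at h
    have hmono := Real.exp_le_exp.2 (mul_le_mul_of_nonneg_left hxT hK.le)
    nlinarith [mul_le_mul_of_nonneg_left hmono (mul_nonneg hK.le hx)]
  simp only [gronwallBound_of_K_ne_0 hK.ne', zero_mul, zero_add]
  rw [div_mul_eq_mul_div, div_le_iff₀ hK]
  nlinarith

-- In `ℝ` an infimum of a family unbounded below is `0`; hence the linear lower bounds below.
noncomputable def growthRate (g : ℝ → ℝ) : ℝ := ⨅ k : {k : ℝ // 0 < k}, g k / k

theorem growthRate_mul_le {g : ℝ → ℝ} {a : ℝ} (hg : ∀ k, 0 < k → a * k ≤ g k) (hg0 : g 0 = 0)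
    {s : ℝ} (hs : 0 ≤ s) : growthRate g * s ≤ g s := by
  rcases hs.eq_or_lt with rfl | hs
  · simp [hg0]
  have hbdd : BddBelow (range fun k : {k : ℝ // 0 < k} => g k / k) := by
    refine ⟨a, ?_⟩
    rintro _ ⟨⟨k, hk⟩, rfl⟩
    exact (le_div_iff₀ hk).2 (hg k hk)
  exact (le_div_iff₀ hs).1 (ciInf_le hbdd ⟨s, hs⟩)

theorem growthRate_le_add_of_quasiSuperadditive {g₁ g₂ : ℝ → ℝ} {a η : ℝ}
    (hg₁ : ∀ k, 0 < k → a * k ≤ g₁ k) (hg₁0 : g₁ 0 = 0) {n : ℕ} (hn : 0 < n)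
    (hsuper : ∀ (q : ℕ) (s : ℝ), q * g₂ n + g₂ s - q ≤ g₂ (q * n + s))
    (hclose : ∀ s ∈ Icc (0 : ℝ) n, g₁ s ≤ g₂ s + η * s) :
    growthRate g₁ ≤ growthRate g₂ + (1 / n + η) := by
  rw [← sub_le_iff_le_add]
  refine le_ciInf fun ⟨k, hk⟩ => ?_
  have hn' : (0 : ℝ) < n := Nat.cast_pos.2 hn
  set q := ⌊k / n⌋₊
  have hq : (q : ℝ) * n ≤ k := (le_div_iff₀ hn').1 (Nat.floor_le (by positivity))
  have hq' : k < (q + 1) * n := (div_lt_iff₀ hn').1 (Nat.lt_floor_add_one _)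
  set s := k - q * n
  have hs : 0 ≤ s := by linarith
  have hsn : s ≤ n := by linarith
  have hk_eq : k = q * n + s := by ring
  have hq0 : (0 : ℝ) ≤ q := q.cast_nonneg
  have key : growthRate g₁ * k ≤ g₂ k + k / n + η * k := calc
    growthRate g₁ * k = growthRate g₁ * s + q * (growthRate g₁ * n) := by ring
    _ ≤ g₁ s + q * g₁ n := by
      gcongr
      exacts [growthRate_mul_le hg₁ hg₁0 hs, growthRate_mul_le hg₁ hg₁0 hn'.le]
    _ ≤ (g₂ s + η * s) + q * (g₂ n + η * n) := by
      gcongr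
      exacts [hclose s ⟨hs, hsn⟩, hclose n ⟨hn'.le, le_rfl⟩]
    _ ≤ g₂ k + q + η * k := by rw [hk_eq]; linarith [hsuper q s]
    _ ≤ g₂ k + k / n + η * k := by linarith [(le_div_iff₀ hn').2 hq]
  rw [le_div_iff₀ hk]
  linarith [show (growthRate g₁ - (1 / n + η)) * k = growthRate g₁ * k - k / n - η * k by ring]

theorem IsFlow.growthRate_le_add {F₁ F₂ φ₁ φ₂ : ℝ → ℝ → ℝ} {K : ℝ≥0}
    (hF₂ : ∀ τ, LipschitzWith K (F₂ · τ)) (hperx : ∀ τ, Periodic (F₂ · τ) 1)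
    (hperτ : ∀ x, Periodic (F₂ x) 1) (hφ₁ : IsFlow F₁ φ₁) (hφ₂ : IsFlow F₂ φ₂) {M ε : ℝ}
    (hM : ∀ x τ, |F₁ x τ| ≤ M) (hε : ∀ x τ, |F₁ x τ - F₂ x τ| ≤ ε) {n : ℕ} (hn : 0 < n) :
    growthRate (φ₁ 0) ≤ growthRate (φ₂ 0) + (1 / n + ε * Real.exp (K * n)) := by
  refine growthRate_le_add_of_quasiSuperadditive (a := -M) (fun k hk => ?_) (hφ₁.apply_zero 0)
    hn (hφ₂.nat_mul_add_le_apply hF₂ hperx hperτ n) fun s hs => ?_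
  · have := hφ₁.abs_sub_le hM 0 hk.le
    rw [sub_zero] at this
    linarith [neg_abs_le (φ₁ 0 k)]
  · have hε0 : 0 ≤ ε := (abs_nonneg _).trans (hε 0 0)
    have := (le_abs_self _).trans ((hφ₁.abs_sub_le_gronwallBound hF₂ hφ₂ hε 0 hs.1).trans
      (gronwallBound_zero_le K.2 hε0 hs.1 hs.2))
    linarith

theorem IsFlow.abs_growthRate_sub_le {F₁ F₂ φ₁ φ₂ : ℝ → ℝ → ℝ} {K : ℝ≥0}
    (hF₁ : ∀ τ, LipschitzWith K (F₁ · τ)) (hF₂ : ∀ τ, LipschitzWith K (F₂ · τ))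
    (hperx₁ : ∀ τ, Periodic (F₁ · τ) 1) (hperx₂ : ∀ τ, Periodic (F₂ · τ) 1)
    (hperτ₁ : ∀ x, Periodic (F₁ x) 1) (hperτ₂ : ∀ x, Periodic (F₂ x) 1)
    (hφ₁ : IsFlow F₁ φ₁) (hφ₂ : IsFlow F₂ φ₂) {M ε : ℝ} (hM₁ : ∀ x τ, |F₁ x τ| ≤ M)
    (hM₂ : ∀ x τ, |F₂ x τ| ≤ M) (hε : ∀ x τ, |F₁ x τ - F₂ x τ| ≤ ε) {n : ℕ} (hn : 0 < n) :
    |growthRate (φ₁ 0) - growthRate (φ₂ 0)| ≤ 1 / n + ε * Real.exp (K * n) := by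
  rw [abs_sub_le_iff, sub_le_iff_le_add', sub_le_iff_le_add']
  exact ⟨hφ₁.growthRate_le_add hF₂ hperx₂ hperτ₂ hφ₂ hM₁ hε hn,
    hφ₂.growthRate_le_add hF₁ hperx₁ hperτ₁ hφ₁ hM₂
      (fun x τ => abs_sub_comm (F₁ x τ) _ ▸ hε x τ) hn⟩

theorem le_two_div_floor_of_lambertW {W : ℝ → ℝ}
    (hW : ∀ x ≥ (0 : ℝ), 0 ≤ W x ∧ W x * Real.exp (W x) = x) {κ δ B : ℝ} (hκ : 0 < κ)
    (hδ : 0 < δ) (hB : ∀ n : ℕ, 0 < n → B ≤ (1 + δ * κ * n * Real.exp (κ * n)) / n)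
    (hfloor : 1 ≤ ⌊κ⁻¹ * W δ⁻¹⌋) : B ≤ 2 / (⌊κ⁻¹ * W δ⁻¹⌋ : ℝ) := by
  obtain ⟨n, hn⟩ := Int.eq_ofNat_of_zero_le (show 0 ≤ ⌊κ⁻¹ * W δ⁻¹⌋ by omega)
  have hκn : κ * n ≤ W δ⁻¹ := by
    have := Int.floor_le (κ⁻¹ * W δ⁻¹)
    rwa [hn, Int.cast_natCast, le_inv_mul_iff₀ hκ] at this
  obtain ⟨hW0, hWeq⟩ := hW δ⁻¹ (by positivity)
  have hsmall : δ * κ * n * Real.exp (κ * n) ≤ 1 := calc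
    δ * κ * n * Real.exp (κ * n) = δ * (κ * n * Real.exp (κ * n)) := by ring
    _ ≤ δ * (W δ⁻¹ * Real.exp (W δ⁻¹)) :=
      mul_le_mul_of_nonneg_left (mul_le_mul hκn (Real.exp_le_exp.2 hκn) (by positivity) hW0) hδ.le
    _ = 1 := by rw [hWeq, mul_inv_cancel₀ hδ.ne']
  rw [hn] at hfloor ⊢
  calc B ≤ (1 + δ * κ * n * Real.exp (κ * n)) / n := hB n (by omega)
    _ ≤ 2 / n := by gcongr; linarith
    _ = 2 / ((n : ℤ) : ℝ) := by rw [Int.cast_natCast]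

theorem abs_sub_add_abs_sub_pos {a b c d : ℝ} (h : (a, b) ≠ (c, d)) : 0 < |a - c| + |b - d| := by
  refine lt_of_le_of_ne (by positivity) fun h0 => h ?_
  obtain ⟨hac, hbd⟩ := (add_eq_zero_iff_of_nonneg (abs_nonneg _) (abs_nonneg _)).1 h0.symm
  rw [sub_eq_zero.1 (abs_eq_zero.1 hac), sub_eq_zero.1 (abs_eq_zero.1 hbd)]

theorem stmt_2_general
    (f : ℝ → ℝ → ℝ → ℝ → ℝ) (κ : ℝ) (hκ : 0 < κ)
    (M : ℝ) (hM : ∀ r τ u t, |f r τ u t| ≤ M)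
    (hlip : ∀ r₁ τ₁ u₁ t₁ r₂ τ₂ u₂ t₂,
      |f r₁ τ₁ u₁ t₁ - f r₂ τ₂ u₂ t₂| ≤
        κ * (|r₁ - r₂| + |τ₁ - τ₂| + |u₁ - u₂| + |t₁ - t₂|))
    (hperr : ∀ r τ u t, f (r + 1) τ u t = f r τ u t)
    (hpert : ∀ r τ u t, f r (τ + 1) u t = f r τ u t)
    (v : ℝ → ℝ → ℝ → ℝ → ℝ)
    (hv0 : ∀ u₀ t₀ c, v u₀ t₀ c 0 = c)
    (hv : ∀ u₀ t₀ c τ, HasDerivAt (v u₀ t₀ c) (f (v u₀ t₀ c τ) τ u₀ t₀) τ)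
    (fbar : ℝ → ℝ → ℝ)
    (hfbar : ∀ u₀ t₀, fbar u₀ t₀ = ⨅ k : {k : ℝ // 0 < k}, v u₀ t₀ 0 (k : ℝ) / (k : ℝ))
    (W : ℝ → ℝ)
    (hW : ∀ x ≥ (0 : ℝ), 0 ≤ W x ∧ W x * Real.exp (W x) = x) :
    ∀ u₁ u₂ t₁ t₂ : ℝ, 0 < t₁ → 0 < t₂ → (u₁, t₁) ≠ (u₂, t₂) →
      ((1 ≤ ⌊κ⁻¹ * W ((|u₁ - u₂| + |t₁ - t₂|)⁻¹)⌋ →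
          |fbar u₁ t₁ - fbar u₂ t₂| ≤
            2 / (⌊κ⁻¹ * W ((|u₁ - u₂| + |t₁ - t₂|)⁻¹)⌋ : ℝ)) ∧
        ∀ n : ℕ, 0 < n →
          |fbar u₁ t₁ - fbar u₂ t₂| ≤
            (1 + (|u₁ - u₂| + |t₁ - t₂|) * κ * n * Real.exp (κ * n)) / n) := by
  have hflow : ∀ u t, IsFlow (fun x τ => f x τ u t) (v u t) := fun u t => ⟨hv u t, hv0 u t⟩
  have hLip : ∀ u t τ, LipschitzWith ⟨κ, hκ.le⟩ (f · τ u t) := fun u t τ =>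
    LipschitzWith.of_dist_le_mul fun x y => by
      show dist _ _ ≤ κ * dist x y
      simpa [Real.dist_eq] using hlip x τ u t y τ u t
  intro u₁ u₂ t₁ t₂ _ _ hne
  have hbound : ∀ n : ℕ, 0 < n → |fbar u₁ t₁ - fbar u₂ t₂| ≤
      (1 + (|u₁ - u₂| + |t₁ - t₂|) * κ * n * Real.exp (κ * n)) / n := fun n hn => by
    rw [hfbar, hfbar]
    refine ((hflow u₁ t₁).abs_growthRate_sub_le (hLip u₁ t₁) (hLip u₂ t₂)
      (fun τ x => hperr x τ u₁ t₁) (fun τ x => hperr x τ u₂ t₂) (fun x τ => hpert x τ u₁ t₁)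
      (fun x τ => hpert x τ u₂ t₂) (hflow u₂ t₂) (fun x τ => hM x τ u₁ t₁)
      (fun x τ => hM x τ u₂ t₂) (fun x τ => by simpa using hlip x τ u₁ t₁ x τ u₂ t₂) hn).trans_eq ?_
    show 1 / (n : ℝ) + κ * (|u₁ - u₂| + |t₁ - t₂|) * Real.exp (κ * n) = _
    field_simp
  exact ⟨le_two_div_floor_of_lambertW hW hκ (abs_sub_add_abs_sub_pos hne) hbound, hbound⟩

/-- Modulus of continuity of the effective nonlinearity `f̄(u,t)` under (f2):
the Lambert-`W` estimate, together with the explicit estimate for every `n ∈ ℕ`. -/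
theorem stmt_2
    (f : ℝ → ℝ → ℝ → ℝ → ℝ) (κ : ℝ) (hκ : 0 < κ)
    (hcont : Continuous fun p : ℝ × ℝ × ℝ × ℝ => f p.1 p.2.1 p.2.2.1 p.2.2.2)
    (M : ℝ) (hM : ∀ r τ u t, |f r τ u t| ≤ M)
    (hlip : ∀ r₁ τ₁ u₁ t₁ r₂ τ₂ u₂ t₂,
      |f r₁ τ₁ u₁ t₁ - f r₂ τ₂ u₂ t₂| ≤
        κ * (|r₁ - r₂| + |τ₁ - τ₂| + |u₁ - u₂| + |t₁ - t₂|))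
    (hperr : ∀ r τ u t, f (r + 1) τ u t = f r τ u t)
    (hpert : ∀ r τ u t, f r (τ + 1) u t = f r τ u t)
    (hmono : ∀ r τ t u₁ u₂, u₁ ≤ u₂ → f r τ u₂ t ≤ f r τ u₁ t)
    (v : ℝ → ℝ → ℝ → ℝ → ℝ)
    (hv0 : ∀ u₀ t₀ c, v u₀ t₀ c 0 = c)
    (hv : ∀ u₀ t₀ c τ, HasDerivAt (v u₀ t₀ c) (f (v u₀ t₀ c τ) τ u₀ t₀) τ)
    (fbar : ℝ → ℝ → ℝ)
    (hfbar : ∀ u₀ t₀, fbar u₀ t₀ = ⨅ k : {k : ℝ // 0 < k}, v u₀ t₀ 0 (k : ℝ) / (k : ℝ))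
    (W : ℝ → ℝ)
    (hW : ∀ x ≥ (0 : ℝ), 0 ≤ W x ∧ W x * Real.exp (W x) = x) :
    ∀ u₁ u₂ t₁ t₂ : ℝ, 0 < t₁ → 0 < t₂ → (u₁, t₁) ≠ (u₂, t₂) →
      ((1 ≤ ⌊κ⁻¹ * W ((|u₁ - u₂| + |t₁ - t₂|)⁻¹)⌋ →
          |fbar u₁ t₁ - fbar u₂ t₂| ≤
            2 / (⌊κ⁻¹ * W ((|u₁ - u₂| + |t₁ - t₂|)⁻¹)⌋ : ℝ)) ∧
        ∀ n : ℕ, 0 < n →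
          |fbar u₁ t₁ - fbar u₂ t₂| ≤
            (1 + (|u₁ - u₂| + |t₁ - t₂|) * κ * n * Real.exp (κ * n)) / n) :=
  stmt_2_general f κ hκ M hM hlip hperr hpert v hv0 hv fbar hfbar W hW
end

section
/- Let f₁, f₂ be 1-periodic bounded continuous functions on ℝ, let a₁, a₂ > 0, and for c = (c₁,c₂) ∈ ℝ² let (u^ε₁, u^ε₂) be the unique solution of the system u̇^ε₁ = −(a₁/ε)(u^ε₁ − u^ε₂) + f₁(t/ε), u̇^ε₂ = −(a₂/ε)(u^ε₂ − u^ε₁) + f₂(t/ε), with u^ε_i(0) = c_i. Then for all t > 0 and i ∈ {1,2}: |u^ε_i(t;c) − m_i(t)| ≤ ( (2a₂(a₁+a₂)+a_i)/(a₁+a₂)² ‖f₁‖_∞ + (2a₁(a₁+a₂)+a_i)/(a₁+a₂)² ‖f₂‖_∞ ) ε, where m_i(t) := (c₁a₂ + c₂a₁)/(a₁+a₂) + ((a₂ f̄₁ + a₁ f̄₂)/(a₁+a₂)) t + (a_i (c_i − c_j)/(a₁+a₂)) e^{−(a₁+a₂)t/ε} with j ≠ i, and f̄_i = ∫₀¹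 f_i(s) ds. -/
/-!
Along the slow direction `a₂ u₁ + a₁ u₂` the coupling cancels, so this combination is a primitive
of the forcing `a₂ f₁ (t/ε) + a₁ f₂ (t/ε)`; for a periodic function the primitive deviates from its
mean drift by at most one period's worth of integral, which after the time change `s = t/ε` is
`O(ε)`. The fast direction `u₁ - u₂` is relaxed at rate `(a₁ + a₂)/ε` and driven by a bounded
forcing, so it stays within `O(ε)` of its free decay `(c₁ - c₂) e^{-(a₁+a₂)t/ε}`. Both components
are recovered as `((a₂ u₁ + a₁ u₂) ± aᵢ (u₁ - u₂)) / (a₁ + a₂)`.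
-/

open MeasureTheory Real

theorem Function.Periodic.abs_intervalIntegral_sub_div_mul_le {f : ℝ → ℝ} {T M : ℝ}
    (hf : Function.Periodic f T) (hT : 0 < T) (hfi : IntervalIntegrable f volume 0 T)
    (hM : ∀ s, |f s| ≤ M) (x : ℝ) :
    |(∫ s in 0..x, f s) - x / T * ∫ s in 0..T, f s| ≤ 2 * M * T := by
  set r := Int.fract (x / T) * T
  obtain ⟨hr₀, hrT⟩ : 0 ≤ r ∧ r < T := Int.fract_div_mul_self_mem_Ico T x hT
  have hx : r + ⌊x / T⌋ • T = x := Int.fract_div_mul_self_add_zsmul_eq T x hT.ne'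
  have hint := hf.intervalIntegrable₀ hT.ne' hfi
  -- Whole periods contribute exactly their share of the mean, leaving a remainder over `[0, r]`.
  have hsplit : (∫ s in 0..x, f s) - x / T * ∫ s in 0..T, f s
      = (∫ s in 0..r, f s) - r / T * ∫ s in 0..T, f s := by
    rw [← hx, ← intervalIntegral.integral_add_adjacent_intervals (hint 0 r) (hint _ _),
      hf.intervalIntegral_add_zsmul_eq _ r hint, hf.intervalIntegral_add_eq r 0, zero_add,
      zsmul_eq_mul]
    field_simp
    ring
  have hbound : ∀ b, |∫ s in 0..b, f s| ≤ M * |b| := fun b => by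
    simpa using intervalIntegral.norm_integral_le_of_norm_le_const (a := 0) (b := b)
      (fun s _ => (norm_eq_abs (f s)).trans_le (hM s))
  have hM₀ : 0 ≤ M := (abs_nonneg _).trans (hM 0)
  calc |(∫ s in 0..x, f s) - x / T * ∫ s in 0..T, f s|
      ≤ |∫ s in 0..r, f s| + r / T * |∫ s in 0..T, f s| := by
        rw [hsplit, ← abs_of_nonneg (div_nonneg hr₀ hT.le), ← abs_mul,
          abs_of_nonneg (div_nonneg hr₀ hT.le)]
        exact abs_sub _ _
    _ ≤ M * r + r / T * (M * T) := by
        gcongr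
        · simpa [abs_of_nonneg hr₀] using hbound r
        · simpa [abs_of_pos hT] using hbound T
    _ ≤ 2 * M * T := by
        rw [div_mul_eq_mul_div, mul_div_assoc, mul_div_cancel_right₀ _ hT.ne']
        nlinarith

theorem abs_sub_sub_div_mul_intervalIntegral_le_of_hasDerivAt {v g : ℝ → ℝ} {T M ε : ℝ}
    (hv : ∀ t, HasDerivAt v (g (t / ε)) t) (hg : Continuous g) (hgT : Function.Periodic g T)
    (hT : 0 < T) (hM : ∀ s, |g s| ≤ M) (hε : 0 < ε) (t : ℝ) :
    |v t - v 0 - t / T * ∫ s in 0..T, g s| ≤ 2 * M * T * ε := by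
  have hftc : v t - v 0 = ε * ∫ s in 0..t / ε, g s := by
    rw [← intervalIntegral.integral_eq_sub_of_hasDerivAt (fun s _ => hv s)
      ((hg.comp (continuous_id.div_const ε)).intervalIntegrable 0 t),
      intervalIntegral.integral_comp_div g hε.ne', zero_div, smul_eq_mul]
  have h := hgT.abs_intervalIntegral_sub_div_mul_le hT (hg.intervalIntegrable 0 T) hM (t / ε)
  calc |v t - v 0 - t / T * ∫ s in 0..T, g s|
      = ε * |(∫ s in 0..t / ε, g s) - t / ε / T * ∫ s in 0..T, g s| := by
        rw [← abs_of_pos hε, ← abs_mul, abs_of_pos hε, hftc]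
        congr 1
        field_simp
    _ ≤ 2 * M * T * ε := by nlinarith

theorem abs_sub_mul_exp_neg_le_of_hasDerivAt {w g : ℝ → ℝ} {k K t : ℝ} (hk : 0 < k)
    (hw : ∀ s, HasDerivAt w (-k * w s + g s) s) (hg : ∀ s, |g s| ≤ K) (ht : 0 ≤ t) :
    |w t - w 0 * exp (-(k * t))| ≤ K / k := by
  -- Duhamel: `(w s * exp (k s))' = g s * exp (k s)`, fenced by `K / k * (exp (k s) - 1)`.
  have hexp : ∀ s, HasDerivAt (fun s => exp (k * s)) (exp (k * s) * k) s := fun s => by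
    simpa using ((hasDerivAt_id s).const_mul k).exp
  have hφ : ∀ s, HasDerivAt (fun s => w s * exp (k * s) - w 0) (g s * exp (k * s)) s :=
    fun s => (((hw s).mul (hexp s)).sub_const _).congr_deriv (by ring)
  have hB : ∀ s, HasDerivAt (fun s => K / k * (exp (k * s) - 1)) (K * exp (k * s)) s :=
    fun s => (((hexp s).sub_const 1).const_mul (K / k)).congr_deriv (by field_simp)
  have hfence := image_norm_le_of_norm_deriv_right_le_deriv_boundary (a := 0) (b := t)
    (fun s _ => (hφ s).continuousAt.continuousWithinAt) (fun s _ => (hφ s).hasDerivWithinAt)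
    (by simp) hB (fun s _ => by
      rw [norm_mul, norm_of_nonneg (exp_pos _).le, Real.norm_eq_abs]
      exact mul_le_mul_of_nonneg_right (hg s) (exp_pos _).le) ⟨ht, le_rfl⟩
  have hK : 0 ≤ K := (abs_nonneg _).trans (hg 0)
  rw [Real.norm_eq_abs] at hfence
  calc |w t - w 0 * exp (-(k * t))| = |w t * exp (k * t) - w 0| * exp (-(k * t)) := by
        rw [← abs_of_pos (exp_pos (-(k * t))), ← abs_mul, abs_of_pos (exp_pos _)]
        congr 1
        rw [sub_mul, mul_assoc, ← exp_add, add_neg_cancel, exp_zero, mul_one]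
    _ ≤ K / k * (exp (k * t) - 1) * exp (-(k * t)) := by gcongr
    _ = K / k * (1 - exp (-(k * t))) := by
        rw [mul_assoc, sub_mul, ← exp_add, add_neg_cancel, exp_zero, one_mul]
    _ ≤ K / k := by
        have := exp_pos (-(k * t))
        have : 0 ≤ K / k := by positivity
        nlinarith

theorem abs_add_mul_div_le_of_abs_le {A B a a₁ a₂ M₁ M₂ ε : ℝ} (ha : 0 ≤ a) (ha₁ : 0 < a₁)
    (ha₂ : 0 < a₂) (hA : |A| ≤ 2 * (a₂ * M₁ + a₁ * M₂) * ε)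
    (hB : |B| ≤ (M₁ + M₂) / ((a₁ + a₂) / ε)) :
    |(A + a * B) / (a₁ + a₂)|
      ≤ ((2 * a₂ * (a₁ + a₂) + a) / (a₁ + a₂) ^ 2 * M₁
          + (2 * a₁ * (a₁ + a₂) + a) / (a₁ + a₂) ^ 2 * M₂) * ε := by
  have hl : 0 < a₁ + a₂ := by positivity
  calc |(A + a * B) / (a₁ + a₂)| ≤ (|A| + a * |B|) / (a₁ + a₂) := by
        rw [abs_div, abs_of_pos hl]
        gcongr
        exact (abs_add_le _ _).trans_eq (by rw [abs_mul, abs_of_nonneg ha])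
    _ ≤ (2 * (a₂ * M₁ + a₁ * M₂) * ε + a * ((M₁ + M₂) / ((a₁ + a₂) / ε))) / (a₁ + a₂) := by
        gcongr
    _ = _ := by
        rcases eq_or_ne ε 0 with rfl | hε
        · simp
        · field_simp
          ring

/-- Weakly coupled system with fast switching rates: explicit `O(ε)` rate toward
the weighted averages `m_i(t)`, for both components. -/
theorem stmt_8
    (f₁ f₂ : ℝ → ℝ) (hc₁ : Continuous f₁) (hc₂ : Continuous f₂)
    (hp₁ : ∀ s, f₁ (s + 1) = f₁ s) (hp₂ : ∀ s, f₂ (s + 1) = f₂ s)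
    (M₁ M₂ : ℝ) (hM₁ : ∀ s, |f₁ s| ≤ M₁) (hM₂ : ∀ s, |f₂ s| ≤ M₂)
    (a₁ a₂ : ℝ) (ha₁ : 0 < a₁) (ha₂ : 0 < a₂)
    (c₁ c₂ : ℝ) (ε : ℝ) (hε : 0 < ε)
    (u₁ u₂ : ℝ → ℝ) (hu₁0 : u₁ 0 = c₁) (hu₂0 : u₂ 0 = c₂)
    (hu₁ : ∀ t, HasDerivAt u₁ (-(a₁ / ε) * (u₁ t - u₂ t) + f₁ (t / ε)) t)
    (hu₂ : ∀ t, HasDerivAt u₂ (-(a₂ / ε) * (u₂ t - u₁ t) + f₂ (t / ε)) t) :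
    ∀ t > (0 : ℝ),
      |u₁ t - ((c₁ * a₂ + c₂ * a₁) / (a₁ + a₂)
          + ((a₂ * (∫ s in (0 : ℝ)..1, f₁ s) + a₁ * (∫ s in (0 : ℝ)..1, f₂ s))
              / (a₁ + a₂)) * t
          + (a₁ * (c₁ - c₂) / (a₁ + a₂)) * Real.exp (-((a₁ + a₂) * t / ε)))|
        ≤ ((2 * a₂ * (a₁ + a₂) + a₁) / (a₁ + a₂) ^ 2 * M₁
            + (2 * a₁ * (a₁ + a₂) + a₁) / (a₁ + a₂) ^ 2 * M₂) * ε ∧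
      |u₂ t - ((c₁ * a₂ + c₂ * a₁) / (a₁ + a₂)
          + ((a₂ * (∫ s in (0 : ℝ)..1, f₁ s) + a₁ * (∫ s in (0 : ℝ)..1, f₂ s))
              / (a₁ + a₂)) * t
          + (a₂ * (c₂ - c₁) / (a₁ + a₂)) * Real.exp (-((a₁ + a₂) * t / ε)))|
        ≤ ((2 * a₂ * (a₁ + a₂) + a₂) / (a₁ + a₂) ^ 2 * M₁
            + (2 * a₁ * (a₁ + a₂) + a₂) / (a₁ + a₂) ^ 2 * M₂) * ε := by
  intro t ht
  have hslow := abs_sub_sub_div_mul_intervalIntegral_le_of_hasDerivAt (T := 1)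
    (v := fun s => a₂ * u₁ s + a₁ * u₂ s) (g := fun s => a₂ * f₁ s + a₁ * f₂ s)
    (fun s => (((hu₁ s).const_mul a₂).add ((hu₂ s).const_mul a₁)).congr_deriv (by ring))
    (by fun_prop) (fun s => by simp only [hp₁ s, hp₂ s]) one_pos
    (fun s => (abs_add_le _ _).trans (by
      rw [abs_mul, abs_mul, abs_of_pos ha₁, abs_of_pos ha₂]
      exact add_le_add (mul_le_mul_of_nonneg_left (hM₁ s) ha₂.le)
        (mul_le_mul_of_nonneg_left (hM₂ s) ha₁.le))) hε t
  have hfast := abs_sub_mul_exp_neg_le_of_hasDerivAt (k := (a₁ + a₂) / ε) (by positivity)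
    (w := fun s => u₁ s - u₂ s) (g := fun s => f₁ (s / ε) - f₂ (s / ε))
    (fun s => ((hu₁ s).sub (hu₂ s)).congr_deriv (by ring))
    (fun s => (abs_sub _ _).trans (add_le_add (hM₁ _) (hM₂ _))) ht.le
  rw [intervalIntegral.integral_add ((hc₁.intervalIntegrable 0 1).const_mul a₂)
    ((hc₂.intervalIntegrable 0 1).const_mul a₁), intervalIntegral.integral_const_mul,
    intervalIntegral.integral_const_mul] at hslow
  simp only [hu₁0, hu₂0, div_one, mul_one] at hslow hfast
  constructor
  · convert abs_add_mul_div_le_of_abs_le ha₁.le ha₁ ha₂ hslow hfast using 2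
    field_simp
    ring_nf
  · rw [← abs_neg] at hfast
    convert abs_add_mul_div_le_of_abs_le ha₂.le ha₁ ha₂ hslow hfast using 2
    field_simp
    ring_nf
end

section
/- Assume n > 1, (f4) and (f5), and let φ ∈ Lip(ℝⁿ). Let V^ε be the weak solution of V^ε_t + f(x/ε, t/ε)·DV^ε = 0 with V^ε(x,0) = φ(x), given by the method of characteristics: V^ε(x,t) = φ(x₀) where x₀ ∈ ℝⁿ is the unique point with u^ε(t;x₀) = x, and u^ε(·;x₀) solves u̇^ε = f(u^ε/ε, t/ε), u^ε(0;x₀) = x₀. Then there exists a vector ξ̄ ∈ ℝⁿ such that for all x ∈ ℝⁿ, t > 0 and ε > 0: |V^ε(x,t) − φ(x − ξ̄ t)| ≤ ‖Dφ‖_∞ (1 + C₀ + 2 max_{1≤i≤n} ‖f_i‖_∞) ε. -/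
/-!
At integer times the displacement `a_c(m) = v(m; c) - c` is a cocycle over the time-one map,
by periodicity of `f` in time, and by periodicity in space together with (f5) it depends on the
starting point `c` only up to `C₀ + 1`. Hence `S(m) = sup_c a_c(m)` is subadditive,
`I(m) = inf_c a_c(m)` is superadditive and `S - I ≤ C₀ + 1`; a number `m ξ̄` squeezed between
them gives `|v(τ; c) - c - τ ξ̄| ≤ 1 + C₀ + 2 M`. The characteristics satisfy
`u^ε(t; x₀) = ε v(t/ε; x₀/ε)`, so the foot `x₀` of the characteristic through `(x, t)` lies within
`(1 + C₀ + 2 M) ε` of `x - t ξ̄`, and `φ` is `L`-Lipschitz.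
-/

open Set
open scoped NNReal

section Flow

variable {E : Type*} [NormedAddCommGroup E] [NormedSpace ℝ E] {F : E → ℝ → E} {K : ℝ≥0}
  {v : E → ℝ → E}

theorem eq_flow_of_hasDerivAt (hF : ∀ τ, LipschitzWith K (F · τ)) (hv0 : ∀ c, v c 0 = c)
    (hv : ∀ c τ, HasDerivAt (v c) (F (v c τ) τ) τ) {g : ℝ → E}
    (hg : ∀ τ, HasDerivAt g (F (g τ) τ) τ) : g = v (g 0) :=
  ODE_solution_unique_univ (v := fun τ r => F r τ) (s := fun _ => univ) (t₀ := 0)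
    (fun τ => (hF τ).lipschitzOnWith) (fun τ => ⟨hg τ, trivial⟩)
    (fun τ => ⟨hv _ τ, trivial⟩) (hv0 _).symm

theorem flow_add_of_periodic (hF : ∀ τ, LipschitzWith K (F · τ)) (hv0 : ∀ c, v c 0 = c)
    (hv : ∀ c τ, HasDerivAt (v c) (F (v c τ) τ) τ) {p : E}
    (hp : ∀ τ, Function.Periodic (F · τ) p) (c : E) (τ : ℝ) : v (c + p) τ = v c τ + p := by
  have hg : ∀ s, HasDerivAt (fun s => v c s + p) (F (v c s + p) s) s := fun s => by
    rw [show F (v c s + p) s = F (v c s) s from hp s (v c s)]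
    exact (hv c s).add_const p
  have := eq_flow_of_hasDerivAt hF hv0 hv hg
  rw [hv0] at this
  exact (congrFun this τ).symm

theorem flow_add_of_periodic_time (hF : ∀ τ, LipschitzWith K (F · τ)) (hv0 : ∀ c, v c 0 = c)
    (hv : ∀ c τ, HasDerivAt (v c) (F (v c τ) τ) τ) {T : ℝ}
    (hT : ∀ r, Function.Periodic (F r) T) (c : E) (τ : ℝ) : v c (τ + T) = v (v c T) τ := by
  have hg : ∀ s, HasDerivAt (fun s => v c (s + T)) (F (v c (s + T)) s) s := fun s => by
    rw [← hT _ s]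
    exact (hv c (s + T)).comp_add_const s T
  have := eq_flow_of_hasDerivAt hF hv0 hv hg
  rw [zero_add] at this
  exact congrFun this τ

theorem hasDerivAt_inv_smul_comp_mul {ε : ℝ} (hε : ε ≠ 0) {u : ℝ → E}
    (hu : ∀ s, HasDerivAt u (F (ε⁻¹ • u s) (s / ε)) s) (τ : ℝ) :
    HasDerivAt (fun τ => ε⁻¹ • u (ε * τ)) (F (ε⁻¹ • u (ε * τ)) τ) τ := by
  have h := ((hu (ε * τ)).scomp τ ((hasDerivAt_id τ).const_mul ε)).const_smul ε⁻¹
  rwa [mul_one, smul_smul, inv_mul_cancel₀ hε, one_smul, mul_div_cancel_left₀ _ hε] at h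

end Flow

section RotationNumber

theorem exists_forall_le_mul_le_of_subadditive {S I : ℕ → ℝ} (hS : Subadditive S)
    (hI : Subadditive (-I)) (hIS : ∀ m, I m ≤ S m) :
    ∃ ξ : ℝ, ∀ m : ℕ, I m ≤ m * ξ ∧ m * ξ ≤ S m := by
  -- `k I(j) ≤ I(kj) ≤ S(kj) ≤ j S(k)`
  have hcross : ∀ j k : ℕ, (k + 1 : ℝ) * I (j + 1) ≤ (j + 1) * S (k + 1) := fun j k => by
    have h₁ := hI.apply_mul_add_le k (j + 1) (j + 1)
    have h₂ := hS.apply_mul_add_le j (k + 1) (k + 1)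
    have h₃ := hIS ((j + 1) * (k + 1))
    simp only [Pi.neg_apply] at h₁
    rw [show k * (j + 1) + (j + 1) = (j + 1) * (k + 1) by ring] at h₁
    rw [show j * (k + 1) + (k + 1) = (j + 1) * (k + 1) by ring] at h₂
    linarith
  have hbdd : BddBelow (range fun k : ℕ => S (k + 1) / (k + 1)) := by
    refine ⟨I 1, forall_mem_range.2 fun k => ?_⟩
    rw [le_div_iff₀ (by positivity), mul_comm]
    simpa using hcross 0 k
  refine ⟨⨅ k : ℕ, S (k + 1) / (k + 1), fun m => ?_⟩
  rcases m with _ | j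
  · have := hS 0 0
    have := hI 0 0
    simp only [Pi.neg_apply, add_zero, CharP.cast_eq_zero, zero_mul] at *
    constructor <;> linarith
  have hj : (0 : ℝ) < j + 1 := by positivity
  push_cast
  constructor
  · rw [← div_le_iff₀' hj]
    refine le_ciInf fun k => ?_
    rw [div_le_div_iff₀ hj (by positivity)]
    linarith [hcross j k]
  · rw [← le_div_iff₀' hj]
    exact_mod_cast ciInf_le hbdd j

theorem exists_forall_abs_sub_mul_le {X : Type*} [Nonempty X] {a : X → ℕ → ℝ} {C : ℝ}
    (hcoc : ∀ x k m, ∃ y, a x (k + m) = a x k + a y m)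
    (hosc : ∀ x y m, a x m ≤ a y m + C) :
    ∃ ξ : ℝ, ∀ x m, |a x m - m * ξ| ≤ C := by
  obtain ⟨x₀⟩ := ‹Nonempty X›
  have hab : ∀ m, BddAbove (range (a · m)) := fun m =>
    ⟨a x₀ m + C, forall_mem_range.2 fun x => hosc x x₀ m⟩
  have hbe : ∀ m, BddBelow (range (a · m)) := fun m =>
    ⟨a x₀ m - C, forall_mem_range.2 fun y => by linarith [hosc x₀ y m]⟩
  have hS : Subadditive fun m => ⨆ x, a x m := fun k m => ciSup_le fun x => by
    obtain ⟨y, hy⟩ := hcoc x k m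
    rw [hy]
    exact add_le_add (le_ciSup (hab k) x) (le_ciSup (hab m) y)
  have hI : Subadditive (-fun m => ⨅ x, a x m) := fun k m => by
    simp only [Pi.neg_apply, ← neg_add, neg_le_neg_iff]
    refine le_ciInf fun x => ?_
    obtain ⟨y, hy⟩ := hcoc x k m
    rw [hy]
    exact add_le_add (ciInf_le (hbe k) x) (ciInf_le (hbe m) y)
  obtain ⟨ξ, hξ⟩ := exists_forall_le_mul_le_of_subadditive hS hI fun m =>
    (ciInf_le (hbe m) x₀).trans (le_ciSup (hab m) x₀)
  have hwidth : ∀ m, (⨆ x, a x m) ≤ (⨅ x, a x m) + C := fun m =>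
    ciSup_le fun x => sub_le_iff_le_add.1 <| le_ciInf fun y => by linarith [hosc x y m]
  refine ⟨ξ, fun x m => abs_le.2 ⟨?_, ?_⟩⟩
  · linarith [ciInf_le (hbe m) x, (hξ m).2, hwidth m]
  · linarith [le_ciSup (hab m) x, (hξ m).1, hwidth m]

theorem abs_le_of_forall_abs_sub_mul_le {b : ℕ → ℝ} {ξ C M : ℝ}
    (hξ : ∀ m, |b m - m * ξ| ≤ C) (hb : ∀ m, |b m| ≤ m * M) : |ξ| ≤ M := by
  have hm : ∀ m : ℕ, m * (|ξ| - M) ≤ C := fun m => by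
    have h := abs_sub_abs_le_abs_sub (m * ξ) (b m)
    rw [abs_sub_comm, abs_mul, Nat.abs_cast] at h
    linarith [hξ m, hb m]
  by_contra! hlt
  obtain ⟨m, hm'⟩ := exists_nat_gt (C / (|ξ| - M))
  rw [div_lt_iff₀ (sub_pos.2 hlt)] at hm'
  linarith [hm m]

end RotationNumber

section Transport

variable {ι : Type*} {F : (ι → ℝ) → ℝ → ι → ℝ} {K : ℝ≥0} {v : (ι → ℝ) → ℝ → ι → ℝ}

theorem abs_flow_apply_sub_le (hv0 : ∀ c, v c 0 = c)
    (hv : ∀ c τ, HasDerivAt (v c) (F (v c τ) τ) τ) {i : ι} {M : ℝ}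
    (hM : ∀ r τ, |F r τ i| ≤ M) (c : ι → ℝ) {τ : ℝ} (hτ : 0 ≤ τ) :
    |v c τ i - c i| ≤ M * τ := by
  have h := norm_image_sub_le_of_norm_deriv_le_segment' (f := fun s => v c s i)
    (fun s _ => (hasDerivAt_pi.1 (hv c s) i).hasDerivWithinAt) (fun s _ => hM (v c s) s) τ
    ⟨hτ, le_rfl⟩
  simpa [hv0] using h

theorem abs_flow_apply_sub_flow_apply_sub_le [Fintype ι] (hF : ∀ τ, LipschitzWith K (F · τ))
    (hv0 : ∀ c, v c 0 = c) (hv : ∀ c τ, HasDerivAt (v c) (F (v c τ) τ) τ)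
    (hp : ∀ τ (l : ι → ℤ), Function.Periodic (F · τ) fun i => (l i : ℝ)) {C₀ : ℝ}
    (hf5 : ∀ c₁ c₂ : ι → ℝ, c₁ - c₂ ∈ Icc 0 1 → ∀ i, ∀ τ > (0 : ℝ), v c₂ τ i - v c₁ τ i ≤ C₀)
    (c c' : ι → ℝ) (i : ι) {τ : ℝ} (hτ : 0 ≤ τ) :
    |v c' τ i - v c τ i - (c' i - c i)| ≤ C₀ + 1 := by
  -- Write `c' = c + d + l` with `l` integral and `d ∈ [0, 1)ⁿ`; (f5) compares `c + d` with
  -- `c` and with `c + 1`, and `v (c + 1) = v c + 1`.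
  rcases hτ.eq_or_lt with rfl | hτ
  · have := hf5 c c (by simp) i 1 one_pos
    simp only [hv0, sub_self, abs_zero] at this ⊢
    linarith
  set d : ι → ℝ := fun j => Int.fract (c' j - c j)
  have hc' : c' = c + d + fun j => (⌊c' j - c j⌋ : ℝ) := by
    ext j
    simp only [d, Pi.add_apply, Int.fract]
    ring
  have hd : d ∈ Icc 0 1 := ⟨fun j => Int.fract_nonneg _, fun j => (Int.fract_lt_one _).le⟩
  have hone : v (c + 1) τ = v c τ + 1 := by
    refine flow_add_of_periodic hF hv0 hv (fun τ r => ?_) c τ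
    rw [Pi.one_def]
    simpa using hp τ 1 r
  have hlow := hf5 (c + d) c (by simpa using hd) i τ hτ
  have hup := hf5 (c + 1) (c + d) ?_ i τ hτ
  · rw [hone] at hup
    rw [hc', flow_add_of_periodic hF hv0 hv (fun τ => hp τ _)]
    simp only [Pi.add_apply, Pi.one_apply] at hup ⊢
    have := Int.fract_nonneg (c' i - c i)
    have := Int.fract_lt_one (c' i - c i)
    rw [abs_le]
    constructor <;> linarith
  · rw [add_sub_add_left_eq_sub]
    exact ⟨sub_nonneg.2 hd.2, sub_le_self _ hd.1⟩

theorem exists_abs_flow_apply_sub_sub_mul_le [Fintype ι] (hF : ∀ τ, LipschitzWith K (F · τ))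
    (hv0 : ∀ c, v c 0 = c) (hv : ∀ c τ, HasDerivAt (v c) (F (v c τ) τ) τ)
    (hp : ∀ τ (l : ι → ℤ), Function.Periodic (F · τ) fun i => (l i : ℝ))
    (hT : ∀ r, Function.Periodic (F r) 1) {M : ι → ℝ} (hM : ∀ r τ i, |F r τ i| ≤ M i) {C₀ : ℝ}
    (hf5 : ∀ c₁ c₂ : ι → ℝ, c₁ - c₂ ∈ Icc 0 1 → ∀ i, ∀ τ > (0 : ℝ), v c₂ τ i - v c₁ τ i ≤ C₀) :
    ∃ ξ : ι → ℝ, ∀ c i τ, 0 ≤ τ → |v c τ i - c i - τ * ξ i| ≤ 1 + C₀ + 2 * M i := by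
  have htime : ∀ (m : ℕ) c τ, v c (τ + m) = v (v c m) τ := fun m =>
    flow_add_of_periodic_time hF hv0 hv fun r => by simpa using (hT r).nat_mul m
  have hnat : ∀ i, ∃ ξ : ℝ, ∀ c (m : ℕ), |v c m i - c i - m * ξ| ≤ C₀ + 1 := fun i =>
    exists_forall_abs_sub_mul_le (a := fun c m => v c m i - c i)
      (fun c k m => ⟨v c k, by rw [Nat.cast_add, add_comm (k : ℝ), htime]; ring⟩)
      fun x y m => by
        have := abs_flow_apply_sub_flow_apply_sub_le hF hv0 hv hp hf5 y x i m.cast_nonneg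
        linarith [(abs_le.1 this).2]
  choose ξ hξ using hnat
  refine ⟨ξ, fun c i τ hτ => ?_⟩
  have hMi : 0 ≤ M i := (abs_nonneg _).trans (hM c 0 i)
  have hξM : |ξ i| ≤ M i := abs_le_of_forall_abs_sub_mul_le (hξ i 0) fun m => by
    rw [mul_comm]
    exact abs_flow_apply_sub_le hv0 hv (hM · · i) 0 m.cast_nonneg
  set m := ⌊τ⌋₊
  have hm : (m : ℝ) ≤ τ := Nat.floor_le hτ
  have hm' : τ < m + 1 := Nat.lt_floor_add_one τ
  have hlast : |v (v c m) (τ - m) i - v c m i| ≤ M i :=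
    (abs_flow_apply_sub_le hv0 hv (hM · · i) _ (sub_nonneg.2 hm)).trans (by nlinarith)
  have hdrift : |(m - τ) * ξ i| ≤ M i := by
    rw [abs_mul]
    have : |(m : ℝ) - τ| ≤ 1 := abs_le.2 ⟨by linarith, by linarith⟩
    nlinarith [abs_nonneg (ξ i), abs_nonneg ((m : ℝ) - τ)]
  calc |v c τ i - c i - τ * ξ i|
      = |(v (v c m) (τ - m) i - v c m i) + (v c m i - c i - m * ξ i) + (m - τ) * ξ i| := by
        rw [← htime, sub_add_cancel]
        ring_nf
    _ ≤ |v (v c m) (τ - m) i - v c m i| + |v c m i - c i - m * ξ i| + |(m - τ) * ξ i| :=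
        abs_add_three _ _ _
    _ ≤ M i + (C₀ + 1) + M i := by gcongr; exact hξ i c m
    _ = 1 + C₀ + 2 * M i := by ring

theorem norm_sub_sub_smul_le_of_rescaled [Fintype ι] [Nonempty ι]
    (hF : ∀ τ, LipschitzWith K (F · τ)) (hv0 : ∀ c, v c 0 = c)
    (hv : ∀ c τ, HasDerivAt (v c) (F (v c τ) τ) τ) {ξ : ι → ℝ} {B : ℝ}
    (hξ : ∀ c i τ, 0 ≤ τ → |v c τ i - c i - τ * ξ i| ≤ B) {ε : ℝ} (hε : 0 < ε)
    {u : ℝ → ι → ℝ} (hu : ∀ s, HasDerivAt u (F (ε⁻¹ • u s) (s / ε)) s) {t : ℝ} (ht : 0 ≤ t) :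
    ‖u 0 - (u t - t • ξ)‖ ≤ B * ε := by
  have hflow := congrFun
    (eq_flow_of_hasDerivAt hF hv0 hv (hasDerivAt_inv_smul_comp_mul hε.ne' hu)) (t / ε)
  simp only [mul_zero, mul_div_cancel₀ t hε.ne'] at hflow
  refine (pi_norm_le_iff_of_nonempty _).2 fun i => ?_
  have h := hξ (ε⁻¹ • u 0) i (t / ε) (by positivity)
  rw [← hflow] at h
  calc ‖(u 0 - (u t - t • ξ)) i‖
      = |ε * ((ε⁻¹ • u t) i - (ε⁻¹ • u 0) i - t / ε * ξ i)| := by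
        rw [Real.norm_eq_abs, ← abs_neg]
        congr 1
        simp only [Pi.sub_apply, Pi.smul_apply, smul_eq_mul]
        field_simp
        ring
    _ = ε * |(ε⁻¹ • u t) i - (ε⁻¹ • u 0) i - t / ε * ξ i| := by rw [abs_mul, abs_of_pos hε]
    _ ≤ B * ε := by rw [mul_comm]; gcongr

end Transport

theorem stmt_9_general
    (n : ℕ) (hn : 1 < n)
    (f : (Fin n → ℝ) → ℝ → (Fin n → ℝ)) (κ : ℝ)
    (hlip : ∀ r₁ τ₁ r₂ τ₂, ‖f r₁ τ₁ - f r₂ τ₂‖ ≤ κ * (‖r₁ - r₂‖ + |τ₁ - τ₂|))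
    (hper : ∀ (r : Fin n → ℝ) (τ : ℝ) (l : Fin n → ℤ) (k : ℤ),
      f (r + fun i => (l i : ℝ)) (τ + k) = f r τ)
    (M : Fin n → ℝ) (hM : ∀ r τ i, |f r τ i| ≤ M i)
    (v : (Fin n → ℝ) → ℝ → (Fin n → ℝ))
    (hv0 : ∀ c, v c 0 = c)
    (hv : ∀ c τ, HasDerivAt (v c) (f (v c τ) τ) τ)
    (C₀ : ℝ)
    (hf5 : ∀ c₁ c₂ : Fin n → ℝ, c₁ - c₂ ∈ Set.Icc (0 : Fin n → ℝ) 1 →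
      ∀ i, ∀ τ > (0 : ℝ), v c₂ τ i - v c₁ τ i ≤ C₀)
    (φ : (Fin n → ℝ) → ℝ) (L : ℝ)
    (hφ : ∀ x y, |φ x - φ y| ≤ L * ‖x - y‖)
    (V : ℝ → (Fin n → ℝ) → ℝ → ℝ)
    (hV : ∀ ε > (0 : ℝ), ∀ (x : Fin n → ℝ) (t : ℝ),
      ∃ (x₀ : Fin n → ℝ) (u : ℝ → (Fin n → ℝ)),
        u 0 = x₀ ∧ (∀ s, HasDerivAt u (f (ε⁻¹ • u s) (s / ε)) s) ∧
        u t = x ∧ V ε x t = φ x₀) :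
    ∃ ξbar : Fin n → ℝ, ∀ ε > (0 : ℝ), ∀ x : Fin n → ℝ, ∀ t > (0 : ℝ),
      |V ε x t - φ (x - t • ξbar)| ≤ L * (1 + C₀ + 2 * ⨆ i, M i) * ε := by
  have hF : ∀ τ, LipschitzWith κ.toNNReal (f · τ) := fun τ =>
    LipschitzWith.of_dist_le' fun r₁ r₂ => by simpa [dist_eq_norm] using hlip r₁ τ r₂ τ
  obtain ⟨ξ, hξ⟩ := exists_abs_flow_apply_sub_sub_mul_le hF hv0 hv
    (fun τ l r => by simpa using hper r τ l 0)
    (fun r τ => by simpa [← Pi.zero_def] using hper r τ 0 1) hM hf5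
  have hξ' : ∀ c i τ, 0 ≤ τ → |v c τ i - c i - τ * ξ i| ≤ 1 + C₀ + 2 * ⨆ i, M i :=
    fun c i τ hτ => (hξ c i τ hτ).trans (by gcongr; exact le_ciSup (Finite.bddAbove_range M) i)
  have : Nonempty (Fin n) := ⟨⟨0, by omega⟩⟩
  have hL : 0 ≤ L := by simpa using (abs_nonneg _).trans (hφ 1 0)
  refine ⟨ξ, fun ε hε x t ht => ?_⟩
  obtain ⟨x₀, u, rfl, hu, rfl, hVe⟩ := hV ε hε x t
  rw [hVe]
  calc |φ (u 0) - φ (u t - t • ξ)| ≤ L * ‖u 0 - (u t - t • ξ)‖ := hφ _ _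
    _ ≤ L * ((1 + C₀ + 2 * ⨆ i, M i) * ε) := by
      gcongr
      exact norm_sub_sub_smul_le_of_rescaled hF hv0 hv hξ' hε hu ht.le
    _ = L * (1 + C₀ + 2 * ⨆ i, M i) * ε := by ring

/-- Homogenization of the linear transport equation in dimension `n > 1`,
under (f4) and (f5): with the solution given by characteristics,
`|V^ε(x,t) - φ(x - ξ̄ t)| ≤ ‖Dφ‖_∞ (1 + C₀ + 2 maxᵢ ‖f_i‖_∞) ε`. -/
theorem stmt_9
    (n : ℕ) (hn : 1 < n)
    (f : (Fin n → ℝ) → ℝ → (Fin n → ℝ)) (κ : ℝ)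
    (hcont : Continuous fun p : (Fin n → ℝ) × ℝ => f p.1 p.2)
    (hlip : ∀ r₁ τ₁ r₂ τ₂, ‖f r₁ τ₁ - f r₂ τ₂‖ ≤ κ * (‖r₁ - r₂‖ + |τ₁ - τ₂|))
    (hper : ∀ (r : Fin n → ℝ) (τ : ℝ) (l : Fin n → ℤ) (k : ℤ),
      f (r + fun i => (l i : ℝ)) (τ + k) = f r τ)
    (M : Fin n → ℝ) (hM : ∀ r τ i, |f r τ i| ≤ M i)
    (v : (Fin n → ℝ) → ℝ → (Fin n → ℝ))
    (hv0 : ∀ c, v c 0 = c)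
    (hv : ∀ c τ, HasDerivAt (v c) (f (v c τ) τ) τ)
    (C₀ : ℝ) (hC₀ : 0 < C₀)
    (hf5 : ∀ c₁ c₂ : Fin n → ℝ, c₁ - c₂ ∈ Set.Icc (0 : Fin n → ℝ) 1 →
      ∀ i, ∀ τ > (0 : ℝ), v c₂ τ i - v c₁ τ i ≤ C₀)
    (φ : (Fin n → ℝ) → ℝ) (L : ℝ)
    (hφ : ∀ x y, |φ x - φ y| ≤ L * ‖x - y‖)
    (V : ℝ → (Fin n → ℝ) → ℝ → ℝ)
    (hV : ∀ ε > (0 : ℝ), ∀ (x : Fin n → ℝ) (t : ℝ),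
      ∃ (x₀ : Fin n → ℝ) (u : ℝ → (Fin n → ℝ)),
        u 0 = x₀ ∧ (∀ s, HasDerivAt u (f (ε⁻¹ • u s) (s / ε)) s) ∧
        u t = x ∧ V ε x t = φ x₀) :
    ∃ ξbar : Fin n → ℝ, ∀ ε > (0 : ℝ), ∀ x : Fin n → ℝ, ∀ t > (0 : ℝ),
      |V ε x t - φ (x - t • ξbar)| ≤ L * (1 + C₀ + 2 * ⨆ i, M i) * ε :=
  stmt_9_general n hn f κ hlip hper M hM v hv0 hv C₀ hf5 φ L hφ V hV
end

section
/- Assume n = 1 and (f1), and let φ ∈ Lip(ℝ). Let V^ε be the weak solution of V^ε_t + f(x/ε, t/ε) V^ε_x = 0 with V^ε(x,0) = φ(x), given by characteristics: V^ε(x,t) = φ(x₀) where u^ε(t;x₀) = x. Then there exists ξ̄ ∈ ℝ such that for all x ∈ ℝ, t > 0 and ε > 0: |V^ε(x,t) − φ(x − ξ̄ t)| ≤ ‖Dφ‖_∞ (1 + 2‖f‖_∞) ε. If moreover f(r,τ) is independent of τ, the estimate improves to |V^ε(x,t) − φ(x − ξ̄ t)| ≤ ‖Dφ‖_∞ ε.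 -/
/-!
In the fast variables `w s = u (ε s) / ε` a characteristic solves `ẇ = f (w, s)`, whose
right-hand side is `1`-periodic in both variables. By uniqueness of solutions the time-`1` map `P`
of this ODE is monotone and commutes with `x ↦ x + 1`, i.e. it is a degree one circle lift, and
`ξ̄` is its translation number. Since `|Pⁿ x - x - n ξ̄| < 1`, and going from time `⌊T⌋` to `T`
costs at most `‖f‖∞` twice, every trajectory satisfies `|w T - w 0 - ξ̄ T| ≤ 1 + 2 ‖f‖∞`. When `f`
does not depend on time, the time-`T` map is itself a circle lift; the previous estimate forces its
translation number to be `ξ̄ T`, which improves the bound to `1`. Scaling back by `ε` and using the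
Lipschitz bound of `φ` gives both estimates.
-/

open Set
open scoped NNReal

def IsTrajectory (f : ℝ → ℝ → ℝ) (w : ℝ → ℝ) : Prop :=
  ∀ s, HasDerivAt w (f (w s) s) s

namespace IsTrajectory

variable {f : ℝ → ℝ → ℝ} {K : ℝ≥0} {w w₁ w₂ : ℝ → ℝ}

theorem continuous (hw : IsTrajectory f w) : Continuous w :=
  continuous_iff_continuousAt.2 fun s => (hw s).continuousAt

theorem eq_of_apply_eq (hf : ∀ τ, LipschitzWith K fun r => f r τ) (h₁ : IsTrajectory f w₁)
    (h₂ : IsTrajectory f w₂) {t₀ : ℝ} (h : w₁ t₀ = w₂ t₀) : w₁ = w₂ :=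
  ODE_solution_unique_univ (v := fun τ r => f r τ) (s := fun _ => univ)
    (fun τ => (hf τ).lipschitzOnWith) (fun s => ⟨h₁ s, trivial⟩) (fun s => ⟨h₂ s, trivial⟩) h

theorem le_of_apply_le (hf : ∀ τ, LipschitzWith K fun r => f r τ) (h₁ : IsTrajectory f w₁)
    (h₂ : IsTrajectory f w₂) {t₀ : ℝ} (h : w₁ t₀ ≤ w₂ t₀) : w₁ ≤ w₂ := by
  intro t
  by_contra! hlt
  have hgap : ContinuousOn (w₂ - w₁) (uIcc t₀ t) := (h₂.continuous.sub h₁.continuous).continuousOn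
  obtain ⟨s, -, hs⟩ := intermediate_value_uIcc hgap
    (show (0 : ℝ) ∈ uIcc ((w₂ - w₁) t₀) ((w₂ - w₁) t) by
      simp only [Pi.sub_apply, mem_uIcc]; right; constructor <;> linarith)
  have := eq_of_apply_eq hf h₁ h₂ (t₀ := s) (by simp only [Pi.sub_apply] at hs; linarith)
  exact lt_irrefl _ (this ▸ hlt)

theorem add_one (hf1 : ∀ r τ, f (r + 1) τ = f r τ) (hw : IsTrajectory f w) :
    IsTrajectory f fun s => w s + 1 := fun s => by
  rw [hf1]; exact (hw s).add_const 1

theorem comp_add_const {c : ℝ} (hc : ∀ r τ, f r (τ + c) = f r τ) (hw : IsTrajectory f w) :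
    IsTrajectory f fun s => w (s + c) := fun s => by
  simpa [hc] using (hw (s + c)).comp_add_const s c

theorem abs_sub_le {M : ℝ} (hM : ∀ r τ, |f r τ| ≤ M) (hw : IsTrajectory f w) {s t : ℝ}
    (hst : s ≤ t) : |w t - w s| ≤ M * (t - s) := by
  simpa [Real.norm_eq_abs] using norm_image_sub_le_of_norm_deriv_le_segment'
    (fun r _ => (hw r).hasDerivWithinAt) (fun r _ => hM (w r) r) t (right_mem_Icc.2 hst)

end IsTrajectory

theorem isTrajectory_comp_mul_div {f : ℝ → ℝ → ℝ} {u : ℝ → ℝ} {ε : ℝ} (hε : ε ≠ 0)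
    (hu : ∀ s, HasDerivAt u (f (u s / ε) (s / ε)) s) :
    IsTrajectory f fun s => u (ε * s) / ε := fun s => by
  have := ((hu (ε * s)).comp s ((hasDerivAt_id s).const_mul ε)).div_const ε
  simpa [Function.comp_def, mul_div_cancel_left₀ _ hε, mul_div_cancel_right₀ _ hε] using this

namespace CircleDeg1Lift

theorem abs_map_sub_sub_translationNumber_lt (F : CircleDeg1Lift) (x : ℝ) :
    |F x - x - F.translationNumber| < 1 := by
  have hfloor := F.floor_sub_le_translationNumber x
  have hceil := F.translationNumber_le_ceil_sub x
  rw [abs_lt]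
  constructor <;> linarith [Int.lt_floor_add_one (F x - x), Int.ceil_lt_add_one (F x - x)]

theorem abs_translationNumber_le {F : CircleDeg1Lift} {M : ℝ} (h : ∀ x, |F x - x| ≤ M) :
    |F.translationNumber| ≤ M :=
  abs_le.2 ⟨F.le_translationNumber_of_add_le fun x => by linarith [(abs_le.1 (h x)).1],
    F.translationNumber_le_of_le_add fun x => by linarith [(abs_le.1 (h x)).2]⟩

theorem translationNumber_eq_of_abs_pow_apply_zero_sub_le {F : CircleDeg1Lift} {a : ℝ} (C : ℝ)
    (h : ∀ n : ℕ, |(F ^ n) 0 - n * a| ≤ C) : F.translationNumber = a := by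
  rw [← translationNumber_translate a]
  refine translationNumber_eq_of_dist_bounded C fun n => ?_
  simpa [Real.dist_eq, ← Units.val_pow_eq_pow_val] using h n

end CircleDeg1Lift

structure IsFlow_s10 (f : ℝ → ℝ → ℝ) (sol : ℝ → ℝ → ℝ) : Prop where
  isTrajectory : ∀ a, IsTrajectory f (sol a)
  apply_zero : ∀ a, sol a 0 = a

namespace IsFlow_s10

variable {f : ℝ → ℝ → ℝ} {K : ℝ≥0} {sol : ℝ → ℝ → ℝ} {w : ℝ → ℝ}

theorem eq_of_isTrajectory (hsol : IsFlow_s10 f sol) (hf : ∀ τ, LipschitzWith K fun r => f r τ)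
    (hw : IsTrajectory f w) : sol (w 0) = w :=
  (hsol.isTrajectory _).eq_of_apply_eq hf hw (t₀ := 0) (hsol.apply_zero _)

theorem add_one_apply (hsol : IsFlow_s10 f sol) (hf : ∀ τ, LipschitzWith K fun r => f r τ)
    (hf1 : ∀ r τ, f (r + 1) τ = f r τ) (a t : ℝ) : sol (a + 1) t = sol a t + 1 := by
  have h := hsol.eq_of_isTrajectory hf ((hsol.isTrajectory a).add_one hf1)
  rw [hsol.apply_zero] at h
  exact congrFun h t

theorem monotone_apply (hsol : IsFlow_s10 f sol) (hf : ∀ τ, LipschitzWith K fun r => f r τ)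
    (t : ℝ) : Monotone fun a => sol a t := fun a b hab =>
  (hsol.isTrajectory a).le_of_apply_le hf (hsol.isTrajectory b) (t₀ := 0)
    (by simpa only [hsol.apply_zero] using hab) t

theorem apply_add (hsol : IsFlow_s10 f sol) (hf : ∀ τ, LipschitzWith K fun r => f r τ) {c : ℝ}
    (hc : ∀ r τ, f r (τ + c) = f r τ) (a t : ℝ) : sol a (t + c) = sol (sol a c) t := by
  have h := hsol.eq_of_isTrajectory hf ((hsol.isTrajectory a).comp_add_const hc)
  simp only [zero_add] at h
  rw [h]

theorem exists_circleDeg1Lift (hsol : IsFlow_s10 f sol) (hf : ∀ τ, LipschitzWith K fun r => f r τ)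
    (hf1 : ∀ r τ, f (r + 1) τ = f r τ) (t : ℝ) : ∃ F : CircleDeg1Lift, ∀ a, F a = sol a t :=
  ⟨⟨⟨fun a => sol a t, hsol.monotone_apply hf t⟩, fun a => hsol.add_one_apply hf hf1 a t⟩,
    fun _ => rfl⟩

theorem pow_apply (hsol : IsFlow_s10 f sol) (hf : ∀ τ, LipschitzWith K fun r => f r τ) {c : ℝ}
    (hc : ∀ r τ, f r (τ + c) = f r τ) {F : CircleDeg1Lift} (hF : ∀ a, F a = sol a c)
    (n : ℕ) (a : ℝ) : (F ^ n) a = sol a (n * c) := by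
  induction n generalizing a with
  | zero => simp [hsol.apply_zero]
  | succ n ih =>
    rw [pow_succ, CircleDeg1Lift.mul_apply, ih, hF, ← hsol.apply_add hf hc]
    push_cast
    ring_nf

theorem abs_sub_sub_translationNumber_mul_le (hsol : IsFlow_s10 f sol)
    (hf : ∀ τ, LipschitzWith K fun r => f r τ) (hτ1 : ∀ r τ, f r (τ + 1) = f r τ) {M : ℝ}
    (hM : ∀ r τ, |f r τ| ≤ M) {P : CircleDeg1Lift} (hP : ∀ a, P a = sol a 1)
    (hw : IsTrajectory f w) {T : ℝ} (hT : 0 ≤ T) :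
    |w T - w 0 - P.translationNumber * T| ≤ 1 + 2 * M := by
  rw [← hsol.eq_of_isTrajectory hf hw, hsol.apply_zero]
  set a := w 0
  set τ := P.translationNumber
  set n := ⌊T⌋₊
  have hM0 : 0 ≤ M := (abs_nonneg _).trans (hM 0 0)
  have hnT : (n : ℝ) ≤ T := Nat.floor_le hT
  have hTn : T - n ≤ 1 := by linarith [Nat.lt_floor_add_one T]
  have hτ : |τ| ≤ M := P.abs_translationNumber_le fun x => by
    simpa [hP, hsol.apply_zero] using (hsol.isTrajectory x).abs_sub_le hM zero_le_one
  have hfrac : |sol a T - sol a n| ≤ M * (T - n) := (hsol.isTrajectory a).abs_sub_le hM hnT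
  have hint : |sol a n - a - n * τ| ≤ 1 := by
    have := (P ^ n).abs_map_sub_sub_translationNumber_lt a
    rw [hsol.pow_apply hf hτ1 hP, mul_one, CircleDeg1Lift.translationNumber_pow] at this
    exact this.le
  have hdrift : |τ * (T - n)| ≤ M * (T - n) := by
    rw [abs_mul, abs_of_nonneg (sub_nonneg.2 hnT)]
    exact mul_le_mul_of_nonneg_right hτ (sub_nonneg.2 hnT)
  have hMTn : M * (T - n) ≤ M := mul_le_of_le_one_right hM0 hTn
  calc |sol a T - a - τ * T|
      = |(sol a T - sol a n) + (sol a n - a - n * τ) - τ * (T - n)| := by ring_nf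
    _ ≤ |sol a T - sol a n| + |sol a n - a - n * τ| + |τ * (T - n)| :=
        (abs_sub _ _).trans (by gcongr; exact abs_add_le _ _)
    _ ≤ 1 + 2 * M := by linarith

theorem abs_sub_sub_translationNumber_mul_le_one (hsol : IsFlow_s10 f sol)
    (hf : ∀ τ, LipschitzWith K fun r => f r τ) (hf1 : ∀ r τ, f (r + 1) τ = f r τ)
    (hauto : ∀ r τ₁ τ₂, f r τ₁ = f r τ₂) {M : ℝ} (hM : ∀ r τ, |f r τ| ≤ M)
    {P : CircleDeg1Lift} (hP : ∀ a, P a = sol a 1) (hw : IsTrajectory f w) {T : ℝ}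
    (hT : 0 ≤ T) : |w T - w 0 - P.translationNumber * T| ≤ 1 := by
  have hper : ∀ {c : ℝ}, ∀ r τ, f r (τ + c) = f r τ := fun r τ => hauto r _ τ
  obtain ⟨F, hF⟩ := hsol.exists_circleDeg1Lift hf hf1 T
  -- `Fⁿ` is the time-`nT` map, whose drift is `nT τ(P)` up to `1 + 2M`
  have hτF : F.translationNumber = P.translationNumber * T :=
    F.translationNumber_eq_of_abs_pow_apply_zero_sub_le (1 + 2 * M) fun n => by
      have := hsol.abs_sub_sub_translationNumber_mul_le hf hper hM hP (hsol.isTrajectory 0)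
        (T := n * T) (by positivity)
      rw [hsol.pow_apply hf hper hF]
      simpa [hsol.apply_zero, mul_left_comm] using this
  rw [← hsol.eq_of_isTrajectory hf hw, hsol.apply_zero, ← hF, ← hτF]
  exact (F.abs_map_sub_sub_translationNumber_lt _).le

end IsFlow_s10

theorem abs_sub_le_of_characteristic {f : ℝ → ℝ → ℝ} {φ : ℝ → ℝ} {u : ℝ → ℝ} {L C ξ ε t : ℝ}
    (hφ : ∀ x y, |φ x - φ y| ≤ L * |x - y|) (hε : 0 < ε)
    (hu : ∀ s, HasDerivAt u (f (u s / ε) (s / ε)) s)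
    (hdrift : ∀ w, IsTrajectory f w → ∀ T, 0 ≤ T → |w T - w 0 - ξ * T| ≤ C) (ht : 0 ≤ t) :
    |φ (u 0) - φ (u t - ξ * t)| ≤ L * C * ε := by
  have hL : 0 ≤ L := by
    have := hφ 0 1
    norm_num at this
    linarith [abs_nonneg (φ 0 - φ 1)]
  have hw := hdrift _ (isTrajectory_comp_mul_div hε.ne' hu) (t / ε) (by positivity)
  rw [mul_zero, mul_div_cancel₀ _ hε.ne'] at hw
  have hu_drift : |u t - u 0 - ξ * t| ≤ C * ε := by
    rw [show u t - u 0 - ξ * t = ε * (u t / ε - u 0 / ε - ξ * (t / ε)) by field_simp, abs_mul,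
      abs_of_pos hε, mul_comm C]
    exact mul_le_mul_of_nonneg_left hw hε.le
  calc |φ (u 0) - φ (u t - ξ * t)| ≤ L * |u 0 - (u t - ξ * t)| := hφ _ _
    _ = L * |u t - u 0 - ξ * t| := by rw [abs_sub_comm]; ring_nf
    _ ≤ L * C * ε := by rw [mul_assoc]; gcongr

theorem stmt_10_general
    (f : ℝ → ℝ → ℝ) (κ : ℝ)
    (hlip : ∀ r₁ τ₁ r₂ τ₂, |f r₁ τ₁ - f r₂ τ₂| ≤ κ * (|r₁ - r₂| + |τ₁ - τ₂|))
    (hper : ∀ (r τ : ℝ) (l k : ℤ), f (r + l) (τ + k) = f r τ)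
    (M : ℝ) (hM : ∀ r τ, |f r τ| ≤ M)
    (φ : ℝ → ℝ) (L : ℝ)
    (hφ : ∀ x y, |φ x - φ y| ≤ L * |x - y|)
    (V : ℝ → ℝ → ℝ → ℝ)
    (hV : ∀ ε > (0 : ℝ), ∀ x t : ℝ,
      ∃ (x₀ : ℝ) (u : ℝ → ℝ),
        u 0 = x₀ ∧ (∀ s, HasDerivAt u (f (u s / ε) (s / ε)) s) ∧
        u t = x ∧ V ε x t = φ x₀) :
    ∃ ξbar : ℝ,
      (∀ ε > (0 : ℝ), ∀ x : ℝ, ∀ t > (0 : ℝ),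
        |V ε x t - φ (x - ξbar * t)| ≤ L * (1 + 2 * M) * ε) ∧
      ((∀ r τ₁ τ₂, f r τ₁ = f r τ₂) →
        ∀ ε > (0 : ℝ), ∀ x : ℝ, ∀ t > (0 : ℝ),
          |V ε x t - φ (x - ξbar * t)| ≤ L * ε) := by
  have hf : ∀ τ, LipschitzWith (Real.toNNReal κ) fun r => f r τ := fun τ =>
    LipschitzWith.of_dist_le' fun r₁ r₂ => by simpa [Real.dist_eq] using hlip r₁ τ r₂ τ
  have hf1 : ∀ r τ, f (r + 1) τ = f r τ := fun r τ => by simpa using hper r τ 1 0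
  have hτ1 : ∀ r τ, f r (τ + 1) = f r τ := fun r τ => by simpa using hper r τ 0 1
  have hex : ∀ a, ∃ w, IsTrajectory f w ∧ w 0 = a := fun a => by
    obtain ⟨-, u, -, hu, hu0, -⟩ := hV 1 one_pos a 0
    exact ⟨u, fun s => by simpa only [div_one] using hu s, hu0⟩
  choose sol hsol hsol0 using hex
  have hflow : IsFlow_s10 f sol := ⟨hsol, hsol0⟩
  obtain ⟨P, hP⟩ := hflow.exists_circleDeg1Lift hf hf1 1
  have hV_le : ∀ C, (∀ w, IsTrajectory f w → ∀ T, 0 ≤ T →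
      |w T - w 0 - P.translationNumber * T| ≤ C) → ∀ ε > (0 : ℝ), ∀ x : ℝ, ∀ t > (0 : ℝ),
        |V ε x t - φ (x - P.translationNumber * t)| ≤ L * C * ε := by
    intro C hdrift ε hε x t ht
    obtain ⟨-, u, rfl, hu, rfl, hVu⟩ := hV ε hε x t
    rw [hVu]
    exact abs_sub_le_of_characteristic hφ hε hu hdrift ht.le
  refine ⟨P.translationNumber, hV_le _ fun w hw T hT => ?_, fun hauto => ?_⟩
  · exact hflow.abs_sub_sub_translationNumber_mul_le hf hτ1 hM hP hw hT
  · simpa using hV_le 1 fun w hw T hT =>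
      hflow.abs_sub_sub_translationNumber_mul_le_one hf hf1 hauto hM hP hw hT

/-- Homogenization of the one-dimensional linear transport equation under (f1):
with the solution given by characteristics,
`|V^ε(x,t) - φ(x - ξ̄ t)| ≤ ‖Dφ‖_∞ (1 + 2‖f‖_∞) ε`, improved to `‖Dφ‖_∞ ε`
when `f` does not depend on `τ`. -/
theorem stmt_10
    (f : ℝ → ℝ → ℝ) (κ : ℝ)
    (hcont : Continuous fun p : ℝ × ℝ => f p.1 p.2)
    (hlip : ∀ r₁ τ₁ r₂ τ₂, |f r₁ τ₁ - f r₂ τ₂| ≤ κ * (|r₁ - r₂| + |τ₁ - τ₂|))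
    (hper : ∀ (r τ : ℝ) (l k : ℤ), f (r + l) (τ + k) = f r τ)
    (M : ℝ) (hM : ∀ r τ, |f r τ| ≤ M)
    (φ : ℝ → ℝ) (L : ℝ)
    (hφ : ∀ x y, |φ x - φ y| ≤ L * |x - y|)
    (V : ℝ → ℝ → ℝ → ℝ)
    (hV : ∀ ε > (0 : ℝ), ∀ x t : ℝ,
      ∃ (x₀ : ℝ) (u : ℝ → ℝ),
        u 0 = x₀ ∧ (∀ s, HasDerivAt u (f (u s / ε) (s / ε)) s) ∧
        u t = x ∧ V ε x t = φ x₀) :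
    ∃ ξbar : ℝ,
      (∀ ε > (0 : ℝ), ∀ x : ℝ, ∀ t > (0 : ℝ),
        |V ε x t - φ (x - ξbar * t)| ≤ L * (1 + 2 * M) * ε) ∧
      ((∀ r τ₁ τ₂, f r τ₁ = f r τ₂) →
        ∀ ε > (0 : ℝ), ∀ x : ℝ, ∀ t > (0 : ℝ),
          |V ε x t - φ (x - ξbar * t)| ≤ L * ε) :=
  stmt_10_general f κ hlip hper M hM φ L hφ V hV
end

section
/- Assume (f1). Then for all σ, l, t > 0 and all c ∈ ℝ, the solutions of the rescaled ODE satisfy the approximate subadditivity inequality v((σ+l)t; (σ+l)c) ≤ v(σt; σc) + v(lt; lc) + 2(‖f‖_∞ + 1). -/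
/-!
Flows of a Lipschitz equation `v̇ = f(v, τ)` are monotone in the initial value, and
`ℤ²`-periodicity makes them commute with integer shifts in space and restart at integer times.
To compare `v(a + b; T + s)` with `v(a; T) + v(b; s)`, move `T` up to `⌈T⌉` (costing at most
`‖f‖_∞` by the speed bound), restart the flow there, and round the two space offsets up to
integers; each rounding costs at most `1`, which gives the constant `2(‖f‖_∞ + 1)`.
-/

def IsGlobalSolution (f : ℝ → ℝ → ℝ) (g : ℝ → ℝ) : Prop :=
  ∀ τ, HasDerivAt g (f (g τ) τ) τ

namespace IsGlobalSolution

variable {f : ℝ → ℝ → ℝ} {g g₁ g₂ : ℝ → ℝ} {K : NNReal}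

theorem continuous (hg : IsGlobalSolution f g) : Continuous g :=
  continuous_iff_continuousAt.mpr fun τ => (hg τ).continuousAt

theorem eq_of_apply_eq (hK : ∀ τ, LipschitzWith K (f · τ)) (h₁ : IsGlobalSolution f g₁)
    (h₂ : IsGlobalSolution f g₂) {s : ℝ} (hs : g₁ s = g₂ s) : g₁ = g₂ :=
  ODE_solution_unique_univ (v := fun τ x => f x τ) (s := fun _ => Set.univ)
    (fun τ => (hK τ).lipschitzOnWith) (fun τ => ⟨h₁ τ, trivial⟩) (fun τ => ⟨h₂ τ, trivial⟩) hs

-- Two solutions cannot cross without meeting, and once they meet they coincide.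
theorem le_of_apply_le (hK : ∀ τ, LipschitzWith K (f · τ)) (h₁ : IsGlobalSolution f g₁)
    (h₂ : IsGlobalSolution f g₂) {s : ℝ} (hs : g₁ s ≤ g₂ s) (τ : ℝ) : g₁ τ ≤ g₂ τ := by
  by_contra! hlt
  obtain ⟨r, -, hr⟩ : ∃ r ∈ Set.uIcc s τ, g₁ r - g₂ r = 0 :=
    intermediate_value_uIcc (f := fun r => g₁ r - g₂ r)
      (h₁.continuous.sub h₂.continuous).continuousOn
      (Set.mem_uIcc.mpr (Or.inl ⟨sub_nonpos.mpr hs, (sub_pos.mpr hlt).le⟩))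
  have := congrFun (h₁.eq_of_apply_eq hK h₂ (sub_eq_zero.mp hr)) τ
  linarith

theorem add_int (hper : ∀ r τ (m : ℤ), f (r + m) τ = f r τ) (hg : IsGlobalSolution f g)
    (m : ℤ) : IsGlobalSolution f (g · + m) := fun τ => by
  simpa only [hper] using (hg τ).add_const (m : ℝ)

theorem comp_add_int (hper : ∀ r τ (k : ℤ), f r (τ + k) = f r τ) (hg : IsGlobalSolution f g)
    (k : ℤ) : IsGlobalSolution f (fun τ => g (τ + k)) := fun τ => by
  simpa only [hper] using (hg (τ + k)).comp_add_const τ (k : ℝ)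

theorem abs_sub_le {M : ℝ} (hM : ∀ r τ, |f r τ| ≤ M) (hg : IsGlobalSolution f g) (a b : ℝ) :
    |g a - g b| ≤ M * |a - b| :=
  convex_univ.norm_image_sub_le_of_norm_hasDerivWithin_le (fun τ _ => (hg τ).hasDerivWithinAt)
    (fun _ _ => hM _ _) (Set.mem_univ b) (Set.mem_univ a)

end IsGlobalSolution

section Flow

variable {f : ℝ → ℝ → ℝ} {v : ℝ → ℝ → ℝ} {K : NNReal}

theorem flow_add_int_left (hK : ∀ τ, LipschitzWith K (f · τ))
    (hper : ∀ r τ (m : ℤ), f (r + m) τ = f r τ) (hv0 : ∀ c, v c 0 = c)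
    (hv : ∀ c, IsGlobalSolution f (v c)) (c : ℝ) (m : ℤ) (τ : ℝ) :
    v (c + m) τ = v c τ + m :=
  congrFun ((hv _).eq_of_apply_eq hK ((hv c).add_int hper m) (s := 0) (by simp [hv0])) τ

theorem flow_add_int_right (hK : ∀ τ, LipschitzWith K (f · τ))
    (hper : ∀ r τ (k : ℤ), f r (τ + k) = f r τ) (hv0 : ∀ c, v c 0 = c)
    (hv : ∀ c, IsGlobalSolution f (v c)) (c : ℝ) (k : ℤ) (τ : ℝ) :
    v c (τ + k) = v (v c k) τ :=
  congrFun (((hv c).comp_add_int hper k).eq_of_apply_eq hK (hv _) (s := 0) (by simp [hv0])) τ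

theorem flow_le_add (hK : ∀ τ, LipschitzWith K (f · τ))
    (hper : ∀ r τ (m : ℤ), f (r + m) τ = f r τ) (hv0 : ∀ c, v c 0 = c)
    (hv : ∀ c, IsGlobalSolution f (v c)) {a b d : ℝ} (h : a ≤ b + d) (τ : ℝ) :
    v a τ ≤ v b τ + d + 1 :=
  calc v a τ ≤ v (b + ⌈d⌉) τ :=
        (hv a).le_of_apply_le hK (hv _) (s := 0) (by simp only [hv0]; linarith [Int.le_ceil d]) τ
    _ = v b τ + ⌈d⌉ := flow_add_int_left hK hper hv0 hv b ⌈d⌉ τ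
    _ ≤ v b τ + d + 1 := by linarith [Int.ceil_lt_add_one d]

theorem flow_add_add_le {M : ℝ} (hK : ∀ τ, LipschitzWith K (f · τ))
    (hspace : ∀ r τ (m : ℤ), f (r + m) τ = f r τ) (htime : ∀ r τ (k : ℤ), f r (τ + k) = f r τ)
    (hM : ∀ r τ, |f r τ| ≤ M) (hv0 : ∀ c, v c 0 = c) (hv : ∀ c, IsGlobalSolution f (v c))
    (a b T s : ℝ) : v (a + b) (T + s) ≤ v a T + v b s + 2 * (M + 1) := by
  have hM0 : 0 ≤ M := (abs_nonneg _).trans (hM 0 0)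
  set δ : ℝ := ⌈T⌉ - T with hδ
  have hδ0 : 0 ≤ δ := sub_nonneg.mpr (Int.le_ceil T)
  have hMδ : M * δ ≤ M := mul_le_of_le_one_right hM0 (by linarith [Int.ceil_lt_add_one T])
  have hrestart : v (a + b) (T + s) = v (v (a + b) ⌈T⌉) (s - δ) := by
    rw [← flow_add_int_right hK htime hv0 hv, hδ]
    ring_nf
  have hceil : v (a + b) ⌈T⌉ ≤ b + (v a T + 1 + M * δ) := by
    have hspeed := (abs_le.mp ((hv (a + b)).abs_sub_le hM ⌈T⌉ T)).2
    have hround := flow_le_add hK hspace hv0 hv (le_refl (a + b)) T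
    rw [← hδ, abs_of_nonneg hδ0] at hspeed
    linarith
  have hback : v b (s - δ) ≤ v b s + M * δ := by
    have hspeed := (abs_le.mp ((hv b).abs_sub_le hM (s - δ) s)).2
    rw [sub_sub_cancel_left, abs_neg, abs_of_nonneg hδ0] at hspeed
    linarith
  rw [hrestart]
  linarith [flow_le_add hK hspace hv0 hv hceil (s - δ)]

end Flow

theorem stmt_12_general
    (f : ℝ → ℝ → ℝ) (κ : ℝ)
    (hlip : ∀ r₁ τ₁ r₂ τ₂, |f r₁ τ₁ - f r₂ τ₂| ≤ κ * (|r₁ - r₂| + |τ₁ - τ₂|))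
    (hper : ∀ (r τ : ℝ) (l k : ℤ), f (r + l) (τ + k) = f r τ)
    (M : ℝ) (hM : ∀ r τ, |f r τ| ≤ M)
    (v : ℝ → ℝ → ℝ)
    (hv0 : ∀ c, v c 0 = c)
    (hv : ∀ c τ, HasDerivAt (v c) (f (v c τ) τ) τ) :
    ∀ σ > (0 : ℝ), ∀ l > (0 : ℝ), ∀ t > (0 : ℝ), ∀ c : ℝ,
      v ((σ + l) * c) ((σ + l) * t) ≤
        v (σ * c) (σ * t) + v (l * c) (l * t) + 2 * (M + 1) := by
  intro σ _ l _ t _ c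
  have hK : ∀ τ, LipschitzWith κ.toNNReal (f · τ) := fun τ =>
    LipschitzWith.of_dist_le' fun x y => by simpa [Real.dist_eq] using hlip x τ y τ
  have hspace : ∀ r τ (m : ℤ), f (r + m) τ = f r τ := fun r τ m => by simpa using hper r τ m 0
  have htime : ∀ r τ (k : ℤ), f r (τ + k) = f r τ := fun r τ k => by simpa using hper r τ 0 k
  rw [add_mul, add_mul]
  exact flow_add_add_le hK hspace htime hM hv0 hv _ _ _ _

/-- Approximate subadditivity of `(τ,c) ↦ v(τ;c)` under (f1):
`v((σ+l)t; (σ+l)c) ≤ v(σt; σc) + v(lt; lc) + 2(‖f‖_∞ + 1)`. -/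
theorem stmt_12
    (f : ℝ → ℝ → ℝ) (κ : ℝ)
    (hcont : Continuous fun p : ℝ × ℝ => f p.1 p.2)
    (hlip : ∀ r₁ τ₁ r₂ τ₂, |f r₁ τ₁ - f r₂ τ₂| ≤ κ * (|r₁ - r₂| + |τ₁ - τ₂|))
    (hper : ∀ (r τ : ℝ) (l k : ℤ), f (r + l) (τ + k) = f r τ)
    (M : ℝ) (hM : ∀ r τ, |f r τ| ≤ M)
    (v : ℝ → ℝ → ℝ)
    (hv0 : ∀ c, v c 0 = c)
    (hv : ∀ c τ, HasDerivAt (v c) (f (v c τ) τ) τ) :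
    ∀ σ > (0 : ℝ), ∀ l > (0 : ℝ), ∀ t > (0 : ℝ), ∀ c : ℝ,
      v ((σ + l) * c) ((σ + l) * t) ≤
        v (σ * c) (σ * t) + v (l * c) (l * t) + 2 * (M + 1) :=
  stmt_12_general f κ hlip hper M hM v hv0 hv
end
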